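/- arXiv:1803.05389 — 5 statements merged into one kernel-verified Lean document; each statement's English description precedes it below -/
import Mathlib

section
/- Let κ be a nonnegative n×m matrix with at least one positive entry in each column. A random microbatch is drawn by: (1) choosing a column j with probability M_j / Σ_h M_h where M_j = max_i κ_{ij}, (2) drawing u uniformly from [0,1], and (3) returning all pairs (i,j) with κ_{ij} ≥ u·M_j. Then the probability that a fixed pair (i,j) with κ_{ij} > 0 is included in the microbatch equals κ_{ij} / Σ_h M_h. -/
/-!
Only the column `j' = j` contributes. Since `κ i j ≤ M j`, the event `u * M j ≤ κ i j` for `u`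
uniform on `[0, 1]` is the interval `[0, κ i j / M j]`, of length `κ i j / M j`, and the
column weight `M j` cancels.
-/

open MeasureTheory

theorem setOf_mem_Icc_and_mul_le_eq_Icc {a c : ℝ} (hc : 0 < c) (hac : a ≤ c) :
    {u : ℝ | u ∈ Set.Icc 0 1 ∧ u * c ≤ a} = Set.Icc 0 (a / c) := by
  ext u
  simp only [Set.mem_ofPred_eq, Set.mem_Icc, ← le_div_iff₀ hc]
  have hquot_le_one : a / c ≤ 1 := (div_le_one hc).mpr hac
  exact ⟨fun ⟨⟨hu0, _⟩, hua⟩ => ⟨hu0, hua⟩,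
    fun ⟨hu0, hua⟩ => ⟨⟨hu0, hua.trans hquot_le_one⟩, hua⟩⟩

theorem toReal_volume_setOf_mem_Icc_and_mul_le {a c : ℝ} (ha : 0 ≤ a) (hc : 0 < c)
    (hac : a ≤ c) :
    (volume {u : ℝ | u ∈ Set.Icc 0 1 ∧ u * c ≤ a}).toReal = a / c := by
  rw [setOf_mem_Icc_and_mul_le_eq_Icc hc hac, Real.volume_Icc, sub_zero,
    ENNReal.toReal_ofReal (div_nonneg ha hc.le)]

theorem coo_microbatch_inclusion_probability_general {n m : ℕ} [NeZero n]
    (κ : Fin n → Fin m → ℝ)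
    (M : Fin m → ℝ) (hM : ∀ j, M j = Finset.univ.sup' Finset.univ_nonempty (fun i => κ i j))
    (hMpos : ∀ j, 0 < M j)
    (i : Fin n) (j : Fin m) (hij : 0 < κ i j) :
    ∑ j', (M j' / ∑ h, M h) *
        (volume {u : ℝ | u ∈ Set.Icc (0:ℝ) 1 ∧ j' = j ∧ κ i j ≥ u * M j'}).toReal
      = κ i j / ∑ h, M h := by
  have hκM : κ i j ≤ M j := hM j ▸ Finset.le_sup' (fun i => κ i j) (Finset.mem_univ i)
  rw [Finset.sum_eq_single_of_mem j (Finset.mem_univ j)]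
  · simp only [true_and, ge_iff_le]
    rw [toReal_volume_setOf_mem_Icc_and_mul_le hij.le (hMpos j) hκM]
    field_simp [(hMpos j).ne']
  · intro j' _ hj'
    simp [hj']

/-- Inclusion probability in a coordinated microbatch: choose column `j'` with
probability `M j' / ∑ h, M h` (`M j = max_i κ i j`), draw `u` uniformly from `[0,1]`,
and include all pairs `(i, j')` with `κ i j' ≥ u * M j'`.  The probability that a fixed
pair `(i, j)` with `κ i j > 0` is included equals `κ i j / ∑ h, M h`. -/
theorem coo_microbatch_inclusion_probability {n m : ℕ} [NeZero n]
    (κ : Fin n → Fin m → ℝ) (hκ : ∀ i j, 0 ≤ κ i j)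
    (M : Fin m → ℝ) (hM : ∀ j, M j = Finset.univ.sup' Finset.univ_nonempty (fun i => κ i j))
    (hMpos : ∀ j, 0 < M j)
    (i : Fin n) (j : Fin m) (hij : 0 < κ i j) :
    ∑ j', (M j' / ∑ h, M h) *
        (volume {u : ℝ | u ∈ Set.Icc (0:ℝ) 1 ∧ j' = j ∧ κ i j ≥ u * M j'}).toReal
      = κ i j / ∑ h, M h :=
  coo_microbatch_inclusion_probability_general κ M hM hMpos i j hij
end

section
/- Let κ be a nonnegative matrix with each column having positive maximum M_j. A single coordinated microbatch chooses column j with probability M_j/ΣM_h and u uniform in [0,1]. For fixed rows i, i', the probability that the microbatch contains both (i,j) and (i',j) (i.e., contributes to the numerator), divided by the probability that it contains at least one of them (contributes to the denominator), equals the weighted Jaccard similarity J(κ_{i·}, κ_{i'·}) = (Σ_j min(κ_{ij},κ_{i'j})) / (Σ_j max(κ_{ij},κ_{i'j})), assuming the denominator probability is positive. -/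
open MeasureTheory

lemma vol_aux (M a : ℝ) (hM : 0 < M) (ha : 0 ≤ a) (haM : a ≤ M) :
    (volume {u : ℝ | u ∈ Set.Icc (0:ℝ) 1 ∧ a ≥ u * M}).toReal = a / M := by
  have hset : {u : ℝ | u ∈ Set.Icc (0:ℝ) 1 ∧ a ≥ u * M} = Set.Icc 0 (a / M) := by
    ext u
    simp only [Set.mem_setOf_eq, Set.mem_Icc, ge_iff_le]
    constructor
    · rintro ⟨⟨h0, h1⟩, h2⟩
      exact ⟨h0, (le_div_iff₀ hM).2 h2⟩
    · rintro ⟨h0, h2⟩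
      have hu1 : u ≤ 1 := h2.trans ((div_le_one hM).2 haM)
      exact ⟨⟨h0, hu1⟩, (le_div_iff₀ hM).1 h2⟩
  rw [hset, Real.volume_Icc, sub_zero, ENNReal.toReal_ofReal (by positivity)]

/-- For a coordinated microbatch (column `j` chosen with probability `M j / ∑ h, M h`,
`u` uniform on `[0,1]`, row `k` included iff `κ k j ≥ u * M j`), the probability of
containing both rows `i, i'` divided by the probability of containing at least one of
them equals the weighted Jaccard similarity of rows `i` and `i'` of `κ`. -/
theorem coo_microbatch_ratio_eq_jaccard {n m : ℕ} [NeZero n]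
    (κ : Fin n → Fin m → ℝ) (hκ : ∀ i j, 0 ≤ κ i j)
    (M : Fin m → ℝ)
    (hM : ∀ j, M j = Finset.univ.sup' Finset.univ_nonempty (fun i => κ i j))
    (hMpos : ∀ j, 0 < M j) (i i' : Fin n)
    (hden : 0 < ∑ j, (M j / ∑ h, M h) *
        (volume {u : ℝ | u ∈ Set.Icc (0:ℝ) 1 ∧ (κ i j ≥ u * M j ∨ κ i' j ≥ u * M j)}).toReal) :
    (∑ j, (M j / ∑ h, M h) *
        (volume {u : ℝ | u ∈ Set.Icc (0:ℝ) 1 ∧ (κ i j ≥ u * M j ∧ κ i' j ≥ u * M j)}).toReal) /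
    (∑ j, (M j / ∑ h, M h) *
        (volume {u : ℝ | u ∈ Set.Icc (0:ℝ) 1 ∧ (κ i j ≥ u * M j ∨ κ i' j ≥ u * M j)}).toReal)
      = (∑ j, min (κ i j) (κ i' j)) / (∑ j, max (κ i j) (κ i' j)) := by
  set S := ∑ h, M h with hS
  have hle : ∀ k j, κ k j ≤ M j := by
    intro k j
    rw [hM j]
    exact Finset.le_sup' (fun i => κ i j) (Finset.mem_univ k)
  have hSne : S ≠ 0 := by
    intro h0
    rw [h0] at hden
    simp at hden
  have hnum : ∀ j : Fin m,
      (M j / S) * (volume {u : ℝ | u ∈ Set.Icc (0:ℝ) 1 ∧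
        (κ i j ≥ u * M j ∧ κ i' j ≥ u * M j)}).toReal = min (κ i j) (κ i' j) / S := by
    intro j
    have hsets : {u : ℝ | u ∈ Set.Icc (0:ℝ) 1 ∧ (κ i j ≥ u * M j ∧ κ i' j ≥ u * M j)}
        = {u : ℝ | u ∈ Set.Icc (0:ℝ) 1 ∧ min (κ i j) (κ i' j) ≥ u * M j} := by
      ext u; simp [le_min_iff, and_assoc]
    rw [hsets, vol_aux _ _ (hMpos j) (le_min (hκ i j) (hκ i' j))
      (min_le_of_left_le (hle i j)), div_mul_div_comm, mul_comm S (M j),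
      mul_div_mul_left _ _ (hMpos j).ne']
  have hden' : ∀ j : Fin m,
      (M j / S) * (volume {u : ℝ | u ∈ Set.Icc (0:ℝ) 1 ∧
        (κ i j ≥ u * M j ∨ κ i' j ≥ u * M j)}).toReal = max (κ i j) (κ i' j) / S := by
    intro j
    have hsets : {u : ℝ | u ∈ Set.Icc (0:ℝ) 1 ∧ (κ i j ≥ u * M j ∨ κ i' j ≥ u * M j)}
        = {u : ℝ | u ∈ Set.Icc (0:ℝ) 1 ∧ max (κ i j) (κ i' j) ≥ u * M j} := by
      ext u; simp [le_max_iff]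
    rw [hsets, vol_aux _ _ (hMpos j) (le_max_of_le_left (hκ i j))
      (max_le (hle i j) (hle i' j)), div_mul_div_comm, mul_comm S (M j),
      mul_div_mul_left _ _ (hMpos j).ne']
  rw [Finset.sum_congr rfl (fun j _ => hnum j), Finset.sum_congr rfl (fun j _ => hden' j),
    ← Finset.sum_div, ← Finset.sum_div, div_div_div_cancel_right₀ hSne]
end

section
/- Combining the previous two results: for any two rows i,i' of κ, letting X_{ij} be the multiplicity of example (i,j) over N i.i.d. coordinated microbatches, the conditional expectation of the empirical weighted Jaccard similarity J(X_{i·}, X_{i'·}), given that Σ_j max(X_{ij}, X_{i'j}) > 0, equals the weighted Jaccard similarity J(κ_{i·}, κ_{i'·}). -/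
/-!
A microbatch `(j, u)` contains example `(a, j)` iff `u * M j ≤ κ a j`, so in each column the
multiplicities of rows `i` and `i'` are nested: `∑ j, max (X i j) (X i' j)` and
`∑ j, min (X i j) (X i' j)` count the draws landing in the regions `A ⊇ B` cut out by the
profiles `max (κ i ·) (κ i' ·)` and `min (κ i ·) (κ i' ·)`, whose probabilities are
`a = ∑ max / ∑ M` and `b = ∑ min / ∑ M`.

On the event `W k ∈ B` one has `#A = 1 + #{l ≠ k | W l ∈ A}`, which is independent of `W k`, so
`E[1_B(W k) / #A] = b * E[(1 + #{l ≠ k | W l ∈ A})⁻¹]`. Summing over `k`, `E[#B / #A] = b * Q`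
and likewise `P(#A > 0) = E[#A / #A] = a * Q` with the same `Q > 0`; the ratio is `b / a`.
-/

open MeasureTheory ProbabilityTheory Finset

lemma ProbabilityTheory.iIndepFun.indepFun_sum_comp_of_notMem {ι Ω E : Type*}
    [MeasurableSpace Ω] [MeasurableSpace E] {μ : Measure Ω} {f : ι → Ω → E}
    (h : iIndepFun f μ) (hf : ∀ i, Measurable (f i)) {g : E → ℝ} (hg : Measurable g)
    {s : Finset ι} {i : ι} (hi : i ∉ s) :
    IndepFun (f i) (fun ω => ∑ j ∈ s, g (f j ω)) μ := by
  have hφ : Measurable fun w : ({i} : Finset ι) → E => w ⟨i, mem_singleton_self i⟩ :=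
    measurable_pi_apply _
  have hψ : Measurable fun w : s → E => ∑ j, g (w j) := by fun_prop
  convert (h.indepFun_finset {i} s (disjoint_singleton_left.mpr hi) hf).comp hφ hψ using 1
  · rfl
  ext ω
  exact (sum_coe_sort s fun j => g (f j ω)).symm

section HitCount

variable {ι Ω E : Type*} [Fintype ι] {W : ι → Ω → E} {S A : Set E}

open Classical in
noncomputable def hitCount (W : ι → Ω → E) (S : Set E) (ω : Ω) : ℕ := #{k | W k ω ∈ S}

lemma natCast_hitCount (W : ι → Ω → E) (S : Set E) (ω : Ω) :
    (hitCount W S ω : ℝ) = ∑ k, S.indicator 1 (W k ω) := by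
  classical
  rw [hitCount, natCast_card_filter]
  simp [Set.indicator_apply]

lemma natCast_hitCount_of_mem [DecidableEq ι] {k : ι} {ω : Ω} (hk : W k ω ∈ S) :
    (hitCount W S ω : ℝ) = ∑ l ∈ univ.erase k, S.indicator 1 (W l ω) + 1 := by
  rw [natCast_hitCount, ← add_sum_erase _ _ (mem_univ k), Set.indicator_of_mem hk, add_comm]
  rfl

variable [MeasurableSpace Ω] [MeasurableSpace E] {μ : Measure Ω}

lemma measurable_natCast_hitCount (hW : ∀ k, Measurable (W k)) (hS : MeasurableSet S) :
    Measurable fun ω => (hitCount W S ω : ℝ) := by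
  simp only [natCast_hitCount]
  exact Finset.measurable_sum _ fun k _ => (measurable_one.indicator hS).comp (hW k)

lemma measurableSet_hitCount_pos (hW : ∀ k, Measurable (W k)) (hS : MeasurableSet S) :
    MeasurableSet {ω | 0 < hitCount W S ω} := by
  simp_rw [← Nat.cast_pos (α := ℝ)]
  exact measurableSet_lt measurable_const (measurable_natCast_hitCount hW hS)

end HitCount

lemma integral_inv_add_one_pos {Ω : Type*} [MeasurableSpace Ω] {μ : Measure Ω}
    [IsProbabilityMeasure μ] {f : Ω → ℝ} (hf : Measurable f) (h0 : ∀ ω, 0 ≤ f ω) :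
    0 < ∫ ω, (f ω + 1)⁻¹ ∂μ := by
  have hpos : ∀ ω, 0 < (f ω + 1)⁻¹ := fun ω => by positivity [h0 ω]
  have hint : Integrable (fun ω => (f ω + 1)⁻¹) μ := by
    refine .of_bound (C := 1) (hf.add_const 1).inv.aestronglyMeasurable (ae_of_all _ fun ω => ?_)
    rw [Real.norm_of_nonneg (hpos ω).le]
    exact inv_le_one_of_one_le₀ (by linarith [h0 ω])
  have hsupp : Function.support (fun ω => (f ω + 1)⁻¹) = Set.univ :=
    Set.eq_univ_of_forall fun ω => (hpos ω).ne'
  rw [integral_pos_iff_support_of_nonneg (fun ω => (hpos ω).le) hint, hsupp, measure_univ]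
  exact one_pos

section Ratio

variable {ι Ω E : Type*} [Fintype ι] [DecidableEq ι] [MeasurableSpace Ω] [MeasurableSpace E]
  {μ : Measure Ω} {W : ι → Ω → E} {S A : Set E}

omit [DecidableEq ι] in
lemma integrable_indicator_div_hitCount [IsFiniteMeasure μ] (hW : ∀ k, Measurable (W k))
    (hS : MeasurableSet S) (hA : MeasurableSet A) (k : ι) :
    Integrable (fun ω => S.indicator 1 (W k ω) / (hitCount W A ω : ℝ)) μ := by
  refine .of_bound (C := 1) ?_ (ae_of_all _ fun ω => ?_)
  · exact (((measurable_one.indicator hS).comp (hW k)).div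
      (measurable_natCast_hitCount hW hA)).aestronglyMeasurable
  · rw [div_eq_mul_inv, norm_mul, norm_inv, Real.norm_natCast]
    exact mul_le_one₀ ((norm_indicator_le_norm_self _ _).trans (by simp)) (by positivity)
      (Nat.cast_inv_le_one _)

lemma integral_indicator_div_hitCount (hW : ∀ k, Measurable (W k)) (hindep : iIndepFun W μ)
    (hS : MeasurableSet S) (hA : MeasurableSet A) (hSA : S ⊆ A) (k : ι) :
    ∫ ω, S.indicator 1 (W k ω) / (hitCount W A ω : ℝ) ∂μ
      = μ.real (W k ⁻¹' S) * ∫ ω, (∑ l ∈ univ.erase k, A.indicator 1 (W l ω) + 1)⁻¹ ∂μ := by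
  have hpt : ∀ ω, S.indicator 1 (W k ω) / (hitCount W A ω : ℝ)
      = S.indicator 1 (W k ω) * (∑ l ∈ univ.erase k, A.indicator 1 (W l ω) + 1)⁻¹ := by
    intro ω
    by_cases hk : W k ω ∈ S
    · rw [natCast_hitCount_of_mem (hSA hk), div_eq_mul_inv]
    · simp [Set.indicator_of_notMem hk]
  have hindep_k : IndepFun (fun ω => S.indicator (1 : E → ℝ) (W k ω))
      (fun ω => (∑ l ∈ univ.erase k, A.indicator (1 : E → ℝ) (W l ω) + 1)⁻¹) μ :=
    (hindep.indepFun_sum_comp_of_notMem hW (measurable_one.indicator hA)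
      (notMem_erase k univ)).comp (measurable_one.indicator hS) (measurable_id.add_const 1).inv
  simp_rw [hpt]
  rw [hindep_k.integral_fun_mul_eq_mul_integral
    ((measurable_one.indicator hS).comp (hW k)).aestronglyMeasurable
    ((Finset.measurable_sum _ fun l _ => (measurable_one.indicator hA).comp (hW l)).add_const
      1).inv.aestronglyMeasurable]
  simp only [← Set.indicator_comp_right, Pi.one_comp]
  rw [integral_indicator_one ((hW k) hS)]

lemma integral_hitCount_div_hitCount (hW : ∀ k, Measurable (W k)) (hindep : iIndepFun W μ)
    (hS : MeasurableSet S) (hA : MeasurableSet A) (hSA : S ⊆ A) {r : ℝ}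
    (hr : ∀ k, μ.real (W k ⁻¹' S) = r) :
    ∫ ω, (hitCount W S ω : ℝ) / hitCount W A ω ∂μ
      = r * ∑ k, ∫ ω, (∑ l ∈ univ.erase k, A.indicator 1 (W l ω) + 1)⁻¹ ∂μ := by
  have := hindep.isProbabilityMeasure
  simp_rw [natCast_hitCount W S, Finset.sum_div]
  rw [integral_finsetSum _ fun k _ => integrable_indicator_div_hitCount hW hS hA k]
  simp_rw [integral_indicator_div_hitCount hW hindep hS hA hSA, hr, mul_sum]

theorem setIntegral_hitCount_div_hitCount_div_measureReal [Nonempty ι]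
    (hW : ∀ k, Measurable (W k)) (hindep : iIndepFun W μ) {B : Set E} (hB : MeasurableSet B)
    (hA : MeasurableSet A) (hBA : B ⊆ A) {a b : ℝ} (ha : ∀ k, μ.real (W k ⁻¹' A) = a)
    (hb : ∀ k, μ.real (W k ⁻¹' B) = b) :
    (∫ ω in {ω | 0 < hitCount W A ω}, (hitCount W B ω : ℝ) / hitCount W A ω ∂μ)
      / μ.real {ω | 0 < hitCount W A ω} = b / a := by
  have := hindep.isProbabilityMeasure
  set Q := ∑ k, ∫ ω, (∑ l ∈ univ.erase k, A.indicator (1 : E → ℝ) (W l ω) + 1)⁻¹ ∂μ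
  have hQ : 0 < Q := by
    refine sum_pos (fun k _ => ?_) univ_nonempty
    exact integral_inv_add_one_pos
      (Finset.measurable_sum _ fun l _ => (measurable_one.indicator hA).comp (hW l))
      fun ω => sum_nonneg fun l _ => Set.indicator_nonneg (fun _ _ => zero_le_one) _
  have hnum : ∫ ω in {ω | 0 < hitCount W A ω}, (hitCount W B ω : ℝ) / hitCount W A ω ∂μ
      = b * Q := by
    -- off the event the integrand is `_ / 0 = 0`
    rw [setIntegral_eq_integral_of_forall_compl_eq_zero fun ω hω => by simp_all]
    exact integral_hitCount_div_hitCount hW hindep hB hA hBA hb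
  have hden : μ.real {ω | 0 < hitCount W A ω} = a * Q := by
    rw [← integral_hitCount_div_hitCount hW hindep hA hA subset_rfl ha,
      ← integral_indicator_one (measurableSet_hitCount_pos hW hA)]
    congr with ω
    by_cases h : 0 < hitCount W A ω
    · simp [h, h.ne']
    · simp [Nat.eq_zero_of_not_pos h]
  rw [hnum, hden, mul_div_mul_right _ _ hQ.ne']

end Ratio

section Microbatch

variable {α ι Ω : Type*} [Fintype α] [Fintype ι]

def thresholdRegion (M e : α → ℝ) : Set (α × ℝ) := {p | p.2 * M p.1 ≤ e p.1}

noncomputable def microbatchLaw [MeasurableSpace α] (M : α → ℝ) : Measure (α × ℝ) :=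
  (∑ j, ENNReal.ofReal (M j / ∑ h, M h) • Measure.dirac j).prod
    (volume.restrict (Set.Icc (0 : ℝ) 1))

noncomputable def thresholdCount [DecidableEq α] (W : ι → Ω → α × ℝ) (M : α → ℝ) (j : α)
    (ω : Ω) (t : ℝ) : ℕ :=
  #{k | (W k ω).1 = j ∧ (W k ω).2 * M j ≤ t}

omit [Fintype α] in
lemma monotone_thresholdCount [DecidableEq α] (W : ι → Ω → α × ℝ) (M : α → ℝ) (j : α) (ω : Ω) :
    Monotone (thresholdCount W M j ω) := fun _ _ hst =>
  card_le_card (monotone_filter_right _ fun _ _ hk => ⟨hk.1, hk.2.trans hst⟩)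

lemma sum_thresholdCount [DecidableEq α] (W : ι → Ω → α × ℝ) (M e : α → ℝ) (ω : Ω) :
    ∑ j, thresholdCount W M j ω (e j) = hitCount W (thresholdRegion M e) ω := by
  classical
  rw [hitCount, card_eq_sum_card_fiberwise (f := fun k => (W k ω).1) fun _ _ => mem_univ _]
  refine sum_congr rfl fun j _ => ?_
  rw [thresholdCount, filter_filter]
  congr 1
  ext k
  simp only [mem_filter, mem_univ, true_and]
  constructor
  · rintro ⟨rfl, hk⟩
    exact ⟨hk, rfl⟩
  · rintro ⟨hk, rfl⟩
    exact ⟨rfl, hk⟩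

lemma measurableSet_thresholdRegion [MeasurableSpace α] [MeasurableSingletonClass α]
    (M e : α → ℝ) : MeasurableSet (thresholdRegion M e) :=
  measurableSet_le (measurable_snd.mul ((measurable_of_countable M).comp measurable_fst))
    ((measurable_of_countable e).comp measurable_fst)

lemma volume_restrict_Icc_Iic {t : ℝ} (ht1 : t ≤ 1) :
    volume.restrict (Set.Icc (0 : ℝ) 1) (Set.Iic t) = ENNReal.ofReal t := by
  have : Set.Iic t ∩ Set.Icc 0 1 = Set.Icc 0 t := by
    ext u
    simp only [Set.mem_inter_iff, Set.mem_Iic, Set.mem_Icc]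
    grind
  rw [Measure.restrict_apply measurableSet_Iic, this, Real.volume_Icc, sub_zero]

lemma microbatchLaw_thresholdRegion [MeasurableSpace α] [MeasurableSingletonClass α]
    {M e : α → ℝ} (hM : ∀ j, 0 < M j) (he0 : ∀ j, 0 ≤ e j) (heM : ∀ j, e j ≤ M j) :
    microbatchLaw M (thresholdRegion M e) = ENNReal.ofReal ((∑ j, e j) / ∑ h, M h) := by
  have hsumM : 0 ≤ ∑ h, M h := sum_nonneg fun j _ => (hM j).le
  have hslice : ∀ j, Prod.mk j ⁻¹' thresholdRegion M e = Set.Iic (e j / M j) := fun j => by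
    ext u
    exact (le_div_iff₀ (hM j)).symm
  rw [microbatchLaw, Measure.prod_apply (measurableSet_thresholdRegion M e),
    lintegral_finsetSum_measure, sum_div,
    ENNReal.ofReal_sum_of_nonneg fun j _ => div_nonneg (he0 j) hsumM]
  refine sum_congr rfl fun j _ => ?_
  rw [lintegral_smul_measure, lintegral_dirac, hslice,
    volume_restrict_Icc_Iic ((div_le_one (hM j)).mpr (heM j)),
    smul_eq_mul, ← ENNReal.ofReal_mul (div_nonneg (hM j).le hsumM)]
  congr 1
  field_simp [(hM j).ne']

lemma measureReal_preimage_thresholdRegion [MeasurableSpace α] [MeasurableSingletonClass α]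
    [MeasurableSpace Ω] {μ : Measure Ω} {V : Ω → α × ℝ} (hV : Measurable V)
    {M e : α → ℝ} (hlaw : μ.map V = microbatchLaw M) (hM : ∀ j, 0 < M j)
    (he0 : ∀ j, 0 ≤ e j) (heM : ∀ j, e j ≤ M j) :
    μ.real (V ⁻¹' thresholdRegion M e) = (∑ j, e j) / ∑ h, M h := by
  rw [measureReal_def, ← Measure.map_apply hV (measurableSet_thresholdRegion M e), hlaw,
    microbatchLaw_thresholdRegion hM he0 heM,
    ENNReal.toReal_ofReal (div_nonneg (sum_nonneg fun j _ => he0 j)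
      (sum_nonneg fun j _ => (hM j).le))]

end Microbatch

theorem coo_epoch_expected_jaccard_general {n m N : ℕ} [NeZero n] [NeZero N]
    (κ : Fin n → Fin m → ℝ) (hκ : ∀ i j, 0 ≤ κ i j)
    (M : Fin m → ℝ)
    (hM : ∀ j, M j = Finset.univ.sup' Finset.univ_nonempty (fun i => κ i j))
    (hMpos : ∀ j, 0 < M j)
    {Ω : Type*} [MeasurableSpace Ω] (μ : Measure Ω)
    (W : Fin N → Ω → Fin m × ℝ) (hmeas : ∀ k, Measurable (W k))
    (hindep : iIndepFun W μ)
    (hlaw : ∀ k, μ.map (W k) =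
      (∑ j, ENNReal.ofReal (M j / ∑ h, M h) • Measure.dirac j).prod
        (volume.restrict (Set.Icc (0:ℝ) 1)))
    (i i' : Fin n) (hpair : 0 < ∑ j, max (κ i j) (κ i' j))
    (X : Fin n → Fin m → Ω → ℕ)
    (hX : ∀ a j ω, X a j ω =
      (Finset.univ.filter (fun k => (W k ω).1 = j ∧ κ a j ≥ (W k ω).2 * M j)).card) :
    (∫ ω in {ω | 0 < ∑ j, max (X i j ω) (X i' j ω)},
        ((∑ j, min (X i j ω) (X i' j ω) : ℕ) : ℝ) /
          ((∑ j, max (X i j ω) (X i' j ω) : ℕ) : ℝ) ∂μ) /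
      (μ {ω | 0 < ∑ j, max (X i j ω) (X i' j ω)}).toReal
    = (∑ j, min (κ i j) (κ i' j)) / (∑ j, max (κ i j) (κ i' j)) := by
  set c : Fin m → ℝ := fun j => max (κ i j) (κ i' j)
  set d : Fin m → ℝ := fun j => min (κ i j) (κ i' j)
  have hcM : ∀ j, c j ≤ M j := fun j =>
    hM j ▸ max_le (le_sup' (κ · j) (mem_univ i)) (le_sup' (κ · j) (mem_univ i'))
  have hd0 : ∀ j, 0 ≤ d j := fun j => le_min (hκ i j) (hκ i' j)
  have hdc : ∀ j, d j ≤ c j := fun j => min_le_max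
  have hXcount : ∀ a j ω, X a j ω = thresholdCount W M j ω (κ a j) := by
    simp only [hX, ge_iff_le, thresholdCount, implies_true]
  have hmax : ∀ ω, ∑ j, max (X i j ω) (X i' j ω) = hitCount W (thresholdRegion M c) ω :=
      fun ω => by
    simp only [hXcount, ← (monotone_thresholdCount _ _ _ _).map_max]
    exact sum_thresholdCount W M c ω
  have hmin : ∀ ω, ∑ j, min (X i j ω) (X i' j ω) = hitCount W (thresholdRegion M d) ω :=
      fun ω => by
    simp only [hXcount, ← (monotone_thresholdCount _ _ _ _).map_min]
    exact sum_thresholdCount W M d ω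
  have hsumM : 0 < ∑ h, M h := hpair.trans_le (sum_le_sum fun j _ => hcM j)
  simp only [hmax, hmin, ← measureReal_def]
  rw [setIntegral_hitCount_div_hitCount_div_measureReal hmeas hindep
    (measurableSet_thresholdRegion M d) (measurableSet_thresholdRegion M c)
    (fun p hp => hp.trans (hdc p.1))
    (fun k => measureReal_preimage_thresholdRegion (hmeas k) (hlaw k) hMpos
      (fun j => (hd0 j).trans (hdc j)) hcM)
    (fun k => measureReal_preimage_thresholdRegion (hmeas k) (hlaw k) hMpos hd0
      fun j => (hdc j).trans (hcM j))]
  exact div_div_div_cancel_right₀ hsumM.ne' _ _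

/-- Expected empirical Jaccard over coordinated microbatches: `N` i.i.d. coordinated
microbatches are modeled by pairs `W k = (column, threshold)` with law
`(∑ j, (M j/∑ h, M h) • δ_j) ⊗ Uniform[0,1]`; the multiplicity of example `(i,j)` is
`X i j = #{k : W k.1 = j ∧ κ i j ≥ W k.2 * M j}`.  For rows `i, i'`, the conditional
expectation of the empirical weighted Jaccard similarity `J(X i ·, X i' ·)`, given
`∑ j, max (X i j) (X i' j) > 0`, equals `J(κ i ·, κ i' ·)`. -/
theorem coo_epoch_expected_jaccard {n m N : ℕ} [NeZero n] [NeZero N]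
    (κ : Fin n → Fin m → ℝ) (hκ : ∀ i j, 0 ≤ κ i j)
    (M : Fin m → ℝ)
    (hM : ∀ j, M j = Finset.univ.sup' Finset.univ_nonempty (fun i => κ i j))
    (hMpos : ∀ j, 0 < M j)
    {Ω : Type*} [MeasurableSpace Ω] (μ : Measure Ω) [IsProbabilityMeasure μ]
    (W : Fin N → Ω → Fin m × ℝ) (hmeas : ∀ k, Measurable (W k))
    (hindep : iIndepFun W μ)
    (hlaw : ∀ k, μ.map (W k) =
      (∑ j, ENNReal.ofReal (M j / ∑ h, M h) • Measure.dirac j).prod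
        (volume.restrict (Set.Icc (0:ℝ) 1)))
    (i i' : Fin n) (hpair : 0 < ∑ j, max (κ i j) (κ i' j))
    (X : Fin n → Fin m → Ω → ℕ)
    (hX : ∀ a j ω, X a j ω =
      (Finset.univ.filter (fun k => (W k ω).1 = j ∧ κ a j ≥ (W k ω).2 * M j)).card) :
    (∫ ω in {ω | 0 < ∑ j, max (X i j ω) (X i' j ω)},
        ((∑ j, min (X i j ω) (X i' j ω) : ℕ) : ℝ) /
          ((∑ j, max (X i j ω) (X i' j ω) : ℕ) : ℝ) ∂μ) /
      (μ {ω | 0 < ∑ j, max (X i j ω) (X i' j ω)}).toReal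
    = (∑ j, min (κ i j) (κ i' j)) / (∑ j, max (κ i j) (κ i' j)) :=
  coo_epoch_expected_jaccard_general κ hκ M hM hMpos μ W hmeas hindep hlaw i i' hpair X hX
end

section
/- Random hyperplane LSH (Goemans–Williamson): Let f, g be nonzero vectors in ℝ^d and let r be drawn uniformly from the unit sphere S^{d-1}. Then P[sign(r·f) = sign(r·g)] = 1 − (1/π)·arccos( (f·g)/(‖f‖‖g‖) ). -/
open MeasureTheory RealInnerProductSpace

/-!
Write `S(u, v)` (`separatingNormals u v`) for the set of normals `r` whose hyperplane separates
`u` and `v`, i.e. `sign ⟪r, u⟫ ≠ sign ⟪r, v⟫`.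

Invariance makes every proper subspace `μ`-null, by induction on the dimension: subspaces of equal
dimension are isometric images of each other, hence have equal measure, and infinitely many of
them meet pairwise in lower-dimensional, hence null, subspaces; in a finite measure their common
measure must vanish. In particular hyperplanes are null.

Off the hyperplanes `u⊥, v⊥, w⊥`, if `v` lies in the cone spanned by `u` and `w`, then `S(u, w)` is
the disjoint union of `S(u, v)` and `S(v, w)`. Along a half circle `θ ↦ cos θ e₁ + sin θ e₂` the
function `G θ = μ S(e₁, cos θ e₁ + sin θ e₂)` is therefore additive on `[0, π]` (rotations of the
plane preserve `μ`), nonnegative, and `G π = μ S(e₁, -e₁) = 1`; such a function is `θ / π`.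
-/

namespace RandomHyperplane

open Module Real InnerProductGeometry

section Isometry

variable {E : Type*} [NormedAddCommGroup E] [InnerProductSpace ℝ E] [FiniteDimensional ℝ E]

theorem exists_linearIsometryEquiv_extend {S S' : Submodule ℝ E} (L : S ≃ₗᵢ[ℝ] S') :
    ∃ T : E ≃ₗᵢ[ℝ] E, ∀ x : S, T x = L x :=
  ⟨(S'.subtypeₗᵢ.comp L.toLinearIsometry).extend.toLinearIsometryEquiv rfl,
    fun x => LinearIsometry.extend_apply _ x⟩

theorem exists_linearIsometryEquiv_image_eq {V V' : Submodule ℝ E}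
    (h : finrank ℝ V = finrank ℝ V') : ∃ T : E ≃ₗᵢ[ℝ] E, T '' V = V' := by
  set L : V ≃ₗᵢ[ℝ] V' := (stdOrthonormalBasis ℝ V).repr.trans
    ((stdOrthonormalBasis ℝ V').reindex (finCongr h.symm)).repr.symm
  obtain ⟨T, hT⟩ := exists_linearIsometryEquiv_extend L
  refine ⟨T, ?_⟩
  calc T '' V = Set.range fun x : V => T x := Set.image_eq_range _ _
    _ = Set.range (Subtype.val ∘ L) := by simp_rw [hT]; rfl
    _ = V' := by rw [L.surjective.range_comp, Subtype.range_coe]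

theorem exists_linearIsometryEquiv_apply_eq {ι : Type*} [Fintype ι] {v w : ι → E}
    (hv : Orthonormal ℝ v) (hw : Orthonormal ℝ w) : ∃ T : E ≃ₗᵢ[ℝ] E, ∀ i, T (v i) = w i := by
  classical
  have hbv : Orthonormal ℝ (Basis.span hv.linearIndependent) := by
    simpa only [← funext (Basis.span_apply hv.linearIndependent)] using orthonormal_span hv
  have hbw : Orthonormal ℝ (Basis.span hw.linearIndependent) := by
    simpa only [← funext (Basis.span_apply hw.linearIndependent)] using orthonormal_span hw
  set bv := (Basis.span hv.linearIndependent).toOrthonormalBasis hbv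
  set bw := (Basis.span hw.linearIndependent).toOrthonormalBasis hbw
  obtain ⟨T, hT⟩ := exists_linearIsometryEquiv_extend (bv.repr.trans bw.repr.symm)
  refine ⟨T, fun i => ?_⟩
  have := hT (bv i)
  rw [LinearIsometryEquiv.trans_apply, OrthonormalBasis.repr_self,
    OrthonormalBasis.repr_symm_single] at this
  simpa [bv, bw, Basis.span_apply] using this

theorem exists_injective_finrank_eq {V : Submodule ℝ E} (hbot : V ≠ ⊥) (htop : V ≠ ⊤) :
    ∃ W : ℕ → Submodule ℝ E, Function.Injective W ∧ ∀ n, finrank ℝ (W n) = finrank ℝ V := by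
  obtain ⟨x, hxV, hx0⟩ := V.ne_bot_iff.1 hbot
  obtain ⟨y, hyV, hy0⟩ := Vᗮ.ne_bot_iff.1 (mt Submodule.orthogonal_eq_bot_iff.1 htop)
  have hxy : ⟪x, y⟫ = 0 := Submodule.inner_right_of_mem_orthogonal hxV hyV
  -- the shear `τ n` moves `x` to `x + n ⟪x, x⟫ y`, which lies in no other `V.map (τ m)`
  let τ (n : ℕ) : E ≃ₗ[ℝ] E :=
    LinearEquiv.transvection (f := (n : ℝ) • innerₛₗ ℝ x) (v := y)
      (by rw [LinearMap.smul_apply, innerₛₗ_apply_apply, hxy, smul_zero])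
  refine ⟨fun n => V.map (τ n).toLinearMap, fun m n hmn => ?_,
    fun n => LinearEquiv.finrank_map_eq _ _⟩
  have hm : τ m x ∈ V.map (τ n).toLinearMap := by
    simp only at hmn
    exact hmn ▸ Submodule.mem_map_of_mem hxV
  obtain ⟨z, hzV, hz⟩ := Submodule.mem_map.1 hm
  simp only [τ, LinearEquiv.coe_coe, LinearEquiv.transvection.apply, LinearMap.smul_apply,
    innerₛₗ_apply_apply, smul_eq_mul] at hz
  have hzy : ⟪z, y⟫ = 0 := Submodule.inner_right_of_mem_orthogonal hzV hyV
  have hyy : ⟪y, y⟫ ≠ 0 := inner_self_ne_zero.2 hy0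
  have hcoef : (n : ℝ) * ⟪x, z⟫ = m * ⟪x, x⟫ := by
    have := congrArg (⟪·, y⟫) hz
    simp only [inner_add_left, real_inner_smul_left, hxy, hzy, zero_add] at this
    exact mul_right_cancel₀ hyy this
  have hzx : z = x := by simpa [hcoef] using hz
  have hxx : ⟪x, x⟫ ≠ 0 := inner_self_ne_zero.2 hx0
  subst hzx
  exact_mod_cast (mul_right_cancel₀ hxx hcoef).symm

end Isometry

theorem eq_zero_of_pairwise_aedisjoint_of_measure_eq {α : Type*} [MeasurableSpace α]
    {μ : Measure α} [IsFiniteMeasure μ] {s : ℕ → Set α} (hs : ∀ n, NullMeasurableSet (s n) μ)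
    (hd : Pairwise (Function.onFun (AEDisjoint μ) s)) {c : ENNReal} (hc : ∀ n, μ (s n) = c) :
    c = 0 := by
  by_contra h
  have hU := measure_iUnion₀ hd hs
  simp only [hc, ENNReal.tsum_const_eq_top_of_ne_zero h] at hU
  exact measure_ne_top μ _ hU

section Invariant

variable {E : Type*} [NormedAddCommGroup E] [InnerProductSpace ℝ E]
  [MeasurableSpace E] [BorelSpace E] {μ : Measure E}

theorem measure_preimage_linearIsometryEquiv (hinv : ∀ T : E ≃ₗᵢ[ℝ] E, μ.map T = μ)
    (T : E ≃ₗᵢ[ℝ] E) (s : Set E) : μ (T ⁻¹' s) = μ s := by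
  conv_rhs => rw [← hinv T]
  exact (T.toHomeomorph.toMeasurableEquiv.map_apply s).symm

theorem measure_submodule_eq_zero [FiniteDimensional ℝ E] [IsFiniteMeasure μ]
    (hinv : ∀ T : E ≃ₗᵢ[ℝ] E, μ.map T = μ) (h0 : μ {0} = 0) {V : Submodule ℝ E} (hV : V ≠ ⊤) :
    μ V = 0 := by
  induction hk : finrank ℝ V using Nat.strong_induction_on generalizing V with
  | _ k ih =>
    rcases eq_or_ne V ⊥ with rfl | hbot
    · simpa using h0
    obtain ⟨W, hWinj, hWrank⟩ := exists_injective_finrank_eq hbot hV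
    have hWmeas : ∀ n, μ (W n) = μ V := fun n => by
      obtain ⟨T, hT⟩ := exists_linearIsometryEquiv_image_eq (hWrank n).symm
      rw [← hT, T.image_eq_preimage_symm, measure_preimage_linearIsometryEquiv hinv]
    refine eq_zero_of_pairwise_aedisjoint_of_measure_eq
      (fun n => (W n).closed_of_finiteDimensional.measurableSet.nullMeasurableSet)
      (fun m n hmn => ?_) hWmeas
    have hlt : W m ⊓ W n < W m := inf_lt_left.2 fun hle =>
      hmn (hWinj (Submodule.eq_of_le_of_finrank_eq hle ((hWrank m).trans (hWrank n).symm)))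
    have hrank : finrank ℝ ↥(W m ⊓ W n) < k :=
      hk ▸ hWrank m ▸ Submodule.finrank_lt_finrank_of_lt hlt
    exact ih _ hrank (fun htop => by
      have := Submodule.finrank_lt hV
      rw [htop, finrank_top] at hrank
      omega) rfl

theorem measure_inner_eq_zero [FiniteDimensional ℝ E] [IsFiniteMeasure μ]
    (hinv : ∀ T : E ≃ₗᵢ[ℝ] E, μ.map T = μ) (h0 : μ {0} = 0) {u : E} (hu : u ≠ 0) :
    μ {r | ⟪r, u⟫ = 0} = 0 := by
  have hset : {r | ⟪r, u⟫ = 0} = ((ℝ ∙ u)ᗮ : Submodule ℝ E) := by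
    ext r
    simp [Submodule.mem_orthogonal_singleton_iff_inner_left]
  rw [hset]
  refine measure_submodule_eq_zero hinv h0 fun htop => hu ?_
  have hmem : u ∈ (ℝ ∙ u)ᗮ := htop ▸ Submodule.mem_top
  exact inner_self_eq_zero.1 (Submodule.mem_orthogonal_singleton_iff_inner_left.1 hmem)

end Invariant

theorem sign_mul_of_pos {a : ℝ} (ha : 0 < a) (x : ℝ) : Real.sign (a * x) = Real.sign x := by
  rcases lt_trichotomy x 0 with hx | rfl | hx
  · rw [Real.sign_of_neg hx, Real.sign_of_neg (mul_neg_of_pos_of_neg ha hx)]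
  · rw [mul_zero]
  · rw [Real.sign_of_pos hx, Real.sign_of_pos (mul_pos ha hx)]

theorem sign_ne_iff_or_and_not_and {a b c x y z : ℝ} (ha : 0 < a) (hb : 0 < b) (hc : 0 ≤ c)
    (h : c * y = a * x + b * z) (hx : x ≠ 0) (hy : y ≠ 0) (hz : z ≠ 0) :
    (Real.sign x ≠ Real.sign z ↔ Real.sign x ≠ Real.sign y ∨ Real.sign y ≠ Real.sign z) ∧
      ¬(Real.sign x ≠ Real.sign y ∧ Real.sign y ≠ Real.sign z) := by
  rcases hx.lt_or_gt with hx | hx <;> rcases hy.lt_or_gt with hy | hy <;>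
    rcases hz.lt_or_gt with hz | hz <;>
    simp only [Real.sign_of_neg, Real.sign_of_pos, hx, hy, hz] <;>
    first | nlinarith | norm_num

theorem measurable_sign : Measurable Real.sign :=
  Measurable.ite measurableSet_Iio measurable_const
    (Measurable.ite measurableSet_Ioi measurable_const measurable_const)

section SeparatingNormals

variable {E : Type*} [NormedAddCommGroup E] [InnerProductSpace ℝ E]

def separatingNormals (u v : E) : Set E := {r | Real.sign ⟪r, u⟫ ≠ Real.sign ⟪r, v⟫}

@[simp]
theorem separatingNormals_self (u : E) : separatingNormals u u = ∅ := by
  simp [separatingNormals]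

theorem separatingNormals_neg (u : E) : separatingNormals u (-u) = {r | ⟪r, u⟫ = 0}ᶜ := by
  ext r
  rw [Set.mem_compl_iff, Set.mem_ofPred_eq, ← Real.sign_eq_zero_iff]
  simp only [separatingNormals, Set.mem_ofPred_eq, inner_neg_right, Real.sign_neg]
  constructor <;> intro h h' <;> apply h <;> linarith

theorem separatingNormals_smul {a b : ℝ} (ha : 0 < a) (hb : 0 < b) (u v : E) :
    separatingNormals (a • u) (b • v) = separatingNormals u v := by
  ext r
  simp only [separatingNormals, Set.mem_ofPred_eq, real_inner_smul_right, sign_mul_of_pos ha,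
    sign_mul_of_pos hb]

theorem separatingNormals_map (T : E ≃ₗᵢ[ℝ] E) (u v : E) :
    separatingNormals (T u) (T v) = T.symm ⁻¹' separatingNormals u v := by
  have hflip (r w : E) : ⟪r, T w⟫ = ⟪T.symm r, w⟫ := by
    rw [← T.inner_map_map (T.symm r), T.apply_symm_apply]
  ext r
  simp only [separatingNormals, Set.mem_ofPred_eq, Set.mem_preimage, hflip]

variable [MeasurableSpace E] [BorelSpace E] {μ : Measure E}

theorem measurableSet_separatingNormals (u v : E) : MeasurableSet (separatingNormals u v) :=
  (measurableSet_eq_fun (measurable_sign.comp (continuous_id.inner continuous_const).measurable)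
    (measurable_sign.comp (continuous_id.inner continuous_const).measurable)).compl

theorem measure_separatingNormals_map (hinv : ∀ T : E ≃ₗᵢ[ℝ] E, μ.map T = μ)
    (T : E ≃ₗᵢ[ℝ] E) (u v : E) :
    μ (separatingNormals (T u) (T v)) = μ (separatingNormals u v) := by
  rw [separatingNormals_map, measure_preimage_linearIsometryEquiv hinv]

variable (hnull : ∀ u : E, u ≠ 0 → μ {r | ⟪r, u⟫ = 0} = 0)
include hnull

theorem measure_separatingNormals_neg [IsProbabilityMeasure μ] {u : E} (hu : u ≠ 0) :
    μ (separatingNormals u (-u)) = 1 := by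
  rw [separatingNormals_neg,
    prob_compl_eq_one_iff (isClosed_eq (by fun_prop) (by fun_prop)).measurableSet]
  exact hnull u hu

theorem measure_separatingNormals_add {u v w : E} (hu : u ≠ 0) (hv : v ≠ 0) (hw : w ≠ 0)
    {a b c : ℝ} (ha : 0 < a) (hb : 0 < b) (hc : 0 ≤ c) (hcone : c • v = a • u + b • w) :
    μ (separatingNormals u w) = μ (separatingNormals u v) + μ (separatingNormals v w) := by
  have hae (x : E) (hx : x ≠ 0) : ∀ᵐ r ∂μ, ⟪r, x⟫ ≠ 0 :=
    measure_eq_zero_iff_ae_notMem.1 (hnull x hx)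
  have hsign : ∀ᵐ r ∂μ, (r ∈ separatingNormals u w ↔
      r ∈ separatingNormals u v ∪ separatingNormals v w) ∧
      ¬(r ∈ separatingNormals u v ∧ r ∈ separatingNormals v w) := by
    filter_upwards [hae u hu, hae v hv, hae w hw] with r hru hrv hrw
    have h : c * ⟪r, v⟫ = a * ⟪r, u⟫ + b * ⟪r, w⟫ := by
      rw [← real_inner_smul_right, hcone, inner_add_right, real_inner_smul_right,
        real_inner_smul_right]
    exact sign_ne_iff_or_and_not_and ha hb hc h hru hrv hrw
  calc μ (separatingNormals u w) = μ (separatingNormals u v ∪ separatingNormals v w) :=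
        measure_congr (Filter.eventuallyEq_set.2 (hsign.mono fun r hr => hr.1))
    _ = μ (separatingNormals u v) + μ (separatingNormals v w) :=
        measure_union₀ (measurableSet_separatingNormals v w).nullMeasurableSet
          (measure_eq_zero_iff_ae_notMem.2 (hsign.mono fun r hr => hr.2))

end SeparatingNormals

section AdditiveOnInterval

variable {a : ℝ} {G : ℝ → ℝ} (hadd : ∀ x y, 0 < x → 0 < y → x + y ≤ a → G (x + y) = G x + G y)
include hadd

theorem apply_natCast_mul {n : ℕ} (hn : 0 < n) {y : ℝ} (hy : 0 < y) (hny : n * y ≤ a) :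
    G (n * y) = n * G y := by
  induction n, hn using Nat.le_induction with
  | base => simp
  | succ n hn ih =>
    push_cast at hny ⊢
    have hn' : (0 : ℝ) < n := by exact_mod_cast hn
    rw [add_one_mul, hadd _ _ (by positivity) hy (by linarith), ih (by linarith)]
    ring

theorem apply_ratCast_mul (ha : 0 < a) {q : ℚ} (hq : 0 < q) (hq1 : (q : ℝ) ≤ 1) :
    G (q * a) = q * G a := by
  obtain ⟨m, hm⟩ := Int.eq_ofNat_of_zero_le (Rat.num_pos.2 hq).le
  have hm0 : 0 < m := by have := Rat.num_pos.2 hq; omega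
  have hn : (0 : ℝ) < q.den := by exact_mod_cast q.den_pos
  have hqa : (q : ℝ) * a = m * (a / q.den) := by
    rw [Rat.cast_def, hm, Int.cast_natCast]
    ring
  have hunit : G a = q.den * G (a / q.den) := by
    rw [← apply_natCast_mul hadd q.den_pos (div_pos ha hn) (mul_div_cancel₀ _ hn.ne').le,
      mul_div_cancel₀ _ hn.ne']
  rw [hqa, apply_natCast_mul hadd hm0 (div_pos ha hn) (by rw [← hqa]; nlinarith), hunit,
    Rat.cast_def, hm, Int.cast_natCast]
  field_simp

variable (hnonneg : ∀ x, 0 < x → x ≤ a → 0 ≤ G x)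
include hnonneg

theorem apply_le_apply_of_additive {x y : ℝ} (hx : 0 < x) (hxy : x ≤ y) (hy : y ≤ a) :
    G x ≤ G y := by
  rcases hxy.eq_or_lt with rfl | hxy
  · rfl
  have h := hadd x (y - x) hx (sub_pos.2 hxy) (by linarith)
  rw [add_sub_cancel] at h
  linarith [hnonneg (y - x) (sub_pos.2 hxy) (by linarith)]

theorem apply_eq_div_mul {x : ℝ} (hx : 0 < x) (hxa : x ≤ a) : G x = x / a * G a := by
  have ha : 0 < a := hx.trans_le hxa
  have hGa : G x ≤ G a := apply_le_apply_of_additive hadd hnonneg hx hxa le_rfl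
  have hGx : 0 ≤ G x := hnonneg x hx hxa
  have hxa' : x / a ≤ 1 := (div_le_one ha).2 hxa
  -- squeeze `x / a` between rationals `q`, where `G (q * a) = q * G a`, using monotonicity
  apply le_antisymm
  · by_contra! h
    have hg : 0 < G a := by nlinarith [div_pos hx ha]
    obtain ⟨q, hxq, hqG⟩ := exists_rat_btwn ((lt_div_iff₀ hg).2 h)
    have hq : (0 : ℝ) < q := (div_pos hx ha).trans hxq
    have hq1 : (q : ℝ) ≤ 1 := hqG.le.trans ((div_le_one hg).2 hGa)
    have := apply_le_apply_of_additive hadd hnonneg hx ((div_lt_iff₀ ha).1 hxq).le (by nlinarith)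
    rw [apply_ratCast_mul hadd ha (by exact_mod_cast hq) hq1] at this
    linarith [(lt_div_iff₀ hg).1 hqG]
  · by_contra! h
    have hg : 0 < G a := by nlinarith [div_pos hx ha]
    obtain ⟨q, hGq, hqx⟩ := exists_rat_btwn ((div_lt_iff₀ hg).2 h)
    have hq : (0 : ℝ) < q := (div_nonneg hGx hg.le).trans_lt hGq
    have := apply_le_apply_of_additive hadd hnonneg (mul_pos hq ha) ((lt_div_iff₀ ha).1 hqx).le
      hxa
    rw [apply_ratCast_mul hadd ha (by exact_mod_cast hq) (by linarith)] at this
    linarith [(div_lt_iff₀ hg).1 hGq]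

end AdditiveOnInterval

section Polar

variable {E : Type*} [NormedAddCommGroup E] [InnerProductSpace ℝ E]

theorem orthonormal_pair_iff {x y : E} :
    Orthonormal ℝ ![x, y] ↔ ‖x‖ = 1 ∧ ‖y‖ = 1 ∧ ⟪x, y⟫ = 0 := by
  refine ⟨fun h => ⟨h.1 0, h.1 1, h.2 (by decide : (0 : Fin 2) ≠ 1)⟩,
    fun ⟨hx, hy, hxy⟩ => ⟨Fin.forall_fin_two.2 ⟨hx, hy⟩, fun i j hij => ?_⟩⟩
  fin_cases i <;> fin_cases j <;> simp_all [real_inner_comm]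

noncomputable def polarVec (e₁ e₂ : E) (θ : ℝ) : E := cos θ • e₁ + sin θ • e₂

variable {e₁ e₂ : E}

@[simp]
theorem polarVec_zero : polarVec e₁ e₂ 0 = e₁ := by simp [polarVec]

@[simp]
theorem polarVec_pi : polarVec e₁ e₂ π = -e₁ := by simp [polarVec]

theorem polarVec_polarVec (a b : ℝ) :
    polarVec (polarVec e₁ e₂ a) (polarVec e₁ e₂ (a + π / 2)) b = polarVec e₁ e₂ (a + b) := by
  simp only [polarVec, cos_add, sin_add, cos_pi_div_two, sin_pi_div_two]
  module

theorem sin_add_smul_polarVec (a b : ℝ) :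
    sin (a + b) • polarVec e₁ e₂ a = sin b • e₁ + sin a • polarVec e₁ e₂ (a + b) := by
  have hcos : sin (a + b) * cos a = sin b + sin a * cos (a + b) := by
    rw [sin_add, cos_add]
    linear_combination sin b * sin_sq_add_cos_sq a
  simp only [polarVec, smul_add, smul_smul, hcos]
  module

theorem exists_orthonormal_polarVec_angle {u v : E} (hu : ‖u‖ = 1) (hv : ‖v‖ = 1)
    (hs : 0 < sin (angle u v)) :
    ∃ e : E, Orthonormal ℝ ![u, e] ∧ polarVec u e (angle u v) = v := by
  set c := cos (angle u v)
  set s := sin (angle u v)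
  have hc : ⟪u, v⟫ = c := by
    rw [show c = cos (angle u v) from rfl, cos_angle, hu, hv, mul_one, div_one]
  have huv : ⟪u, v - c • u⟫ = 0 := by
    rw [inner_sub_right, real_inner_smul_right, real_inner_self_eq_norm_sq, hu, hc]
    ring
  have hnorm : ‖v - c • u‖ = s := by
    have h := norm_add_sq_eq_norm_sq_add_norm_sq_real (x := c • u) (y := v - c • u)
      (by rw [real_inner_smul_left, huv, mul_zero])
    simp only [add_sub_cancel, hv, norm_smul, hu, mul_one, Real.norm_eq_abs,
      abs_mul_abs_self] at h
    exact (sq_eq_sq₀ (norm_nonneg _) hs.le).1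
      (by linear_combination -h - sin_sq_add_cos_sq (angle u v))
  refine ⟨s⁻¹ • (v - c • u), orthonormal_pair_iff.2 ⟨hu, ?_, ?_⟩, ?_⟩
  · rw [norm_smul, hnorm, norm_inv, Real.norm_of_nonneg hs.le, inv_mul_cancel₀ hs.ne']
  · rw [real_inner_smul_right, huv, mul_zero]
  · rw [polarVec, smul_smul, mul_inv_cancel₀ hs.ne', one_smul, add_sub_cancel]

variable (he : Orthonormal ℝ ![e₁, e₂])
include he

theorem inner_polarVec (a b : ℝ) : ⟪polarVec e₁ e₂ a, polarVec e₁ e₂ b⟫ = cos (a - b) := by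
  obtain ⟨h₁, h₂, h₁₂⟩ := orthonormal_pair_iff.1 he
  simp only [polarVec, inner_add_left, inner_add_right, real_inner_smul_left,
    real_inner_smul_right, real_inner_self_eq_norm_sq, h₁, h₂, h₁₂, real_inner_comm e₁ e₂,
    cos_sub]
  ring

theorem norm_polarVec (a : ℝ) : ‖polarVec e₁ e₂ a‖ = 1 := by
  have h := inner_polarVec he a a
  rw [sub_self, cos_zero, real_inner_self_eq_norm_sq] at h
  exact (sq_eq_sq₀ (norm_nonneg _) zero_le_one).1 (by rw [h, one_pow])

theorem polarVec_ne_zero (a : ℝ) : polarVec e₁ e₂ a ≠ 0 :=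
  norm_ne_zero_iff.1 (by rw [norm_polarVec he]; exact one_ne_zero)

theorem orthonormal_polarVec (a : ℝ) :
    Orthonormal ℝ ![polarVec e₁ e₂ a, polarVec e₁ e₂ (a + π / 2)] :=
  orthonormal_pair_iff.2 ⟨norm_polarVec he a, norm_polarVec he _, by
    rw [inner_polarVec he, sub_add_cancel_left, cos_neg, cos_pi_div_two]⟩

theorem exists_linearIsometryEquiv_polarVec [FiniteDimensional ℝ E] (a : ℝ) :
    ∃ T : E ≃ₗᵢ[ℝ] E, ∀ b, T (polarVec e₁ e₂ b) = polarVec e₁ e₂ (a + b) := by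
  obtain ⟨T, hT⟩ := exists_linearIsometryEquiv_apply_eq he (orthonormal_polarVec he a)
  refine ⟨T, fun b => ?_⟩
  have h₁ : T e₁ = polarVec e₁ e₂ a := hT 0
  have h₂ : T e₂ = polarVec e₁ e₂ (a + π / 2) := hT 1
  rw [← polarVec_polarVec, polarVec, map_add, map_smul, map_smul, h₁, h₂]
  rfl

end Polar

section Angle

variable {E : Type*} [NormedAddCommGroup E] [InnerProductSpace ℝ E] [FiniteDimensional ℝ E]
  [MeasurableSpace E] [BorelSpace E] {μ : Measure E} [IsProbabilityMeasure μ]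
  (hinv : ∀ T : E ≃ₗᵢ[ℝ] E, μ.map T = μ) (hnull : ∀ u : E, u ≠ 0 → μ {r | ⟪r, u⟫ = 0} = 0)
include hinv hnull

theorem measure_separatingNormals_polarVec {e₁ e₂ : E} (he : Orthonormal ℝ ![e₁, e₂]) {θ : ℝ}
    (h0 : 0 ≤ θ) (hπ : θ ≤ π) :
    (μ (separatingNormals e₁ (polarVec e₁ e₂ θ))).toReal = θ / π := by
  rcases h0.eq_or_lt with rfl | h0
  · simp
  have he₁ : e₁ ≠ 0 := by simpa using polarVec_ne_zero he 0
  set G : ℝ → ℝ := fun t => (μ (separatingNormals e₁ (polarVec e₁ e₂ t))).toReal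
  have hadd (x y : ℝ) (hx : 0 < x) (hy : 0 < y) (hxy : x + y ≤ π) : G (x + y) = G x + G y := by
    obtain ⟨T, hT⟩ := exists_linearIsometryEquiv_polarVec he x
    have hrot : μ (separatingNormals (polarVec e₁ e₂ x) (polarVec e₁ e₂ (x + y))) =
        μ (separatingNormals e₁ (polarVec e₁ e₂ y)) := by
      have h₁ : T e₁ = polarVec e₁ e₂ x := by simpa using hT 0
      rw [← measure_separatingNormals_map hinv T e₁, h₁, hT]
    simp only [G]
    rw [measure_separatingNormals_add hnull he₁ (polarVec_ne_zero he x) (polarVec_ne_zero he _)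
      (sin_pos_of_pos_of_lt_pi hy (by linarith)) (sin_pos_of_pos_of_lt_pi hx (by linarith))
      (sin_nonneg_of_nonneg_of_le_pi (by linarith) hxy) (sin_add_smul_polarVec x y), hrot,
      ENNReal.toReal_add (measure_ne_top _ _) (measure_ne_top _ _)]
  have hGπ : G π = 1 := by simp [G, measure_separatingNormals_neg hnull he₁]
  show G θ = θ / π
  rw [apply_eq_div_mul (G := G) hadd (fun _ _ _ => ENNReal.toReal_nonneg) h0 hπ, hGπ, mul_one]

theorem measure_separatingNormals_of_norm_eq_one {u v : E} (hu : ‖u‖ = 1) (hv : ‖v‖ = 1) :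
    (μ (separatingNormals u v)).toReal = angle u v / π := by
  have hu0 : u ≠ 0 := norm_ne_zero_iff.1 (by rw [hu]; exact one_ne_zero)
  rcases (angle_nonneg u v).eq_or_lt with h0 | h0
  · obtain ⟨-, r, hr, rfl⟩ := angle_eq_zero_iff.1 h0.symm
    rw [← h0, zero_div]
    simpa using congrArg (fun s => (μ s).toReal) (separatingNormals_smul one_pos hr u u)
  rcases (angle_le_pi u v).eq_or_lt with hπ | hπ
  · obtain ⟨-, r, hr, rfl⟩ := angle_eq_pi_iff.1 hπ
    have h := separatingNormals_smul one_pos (neg_pos.2 hr) u (-u)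
    rw [one_smul, neg_smul_neg] at h
    rw [hπ, div_self pi_ne_zero, h, measure_separatingNormals_neg hnull hu0, ENNReal.toReal_one]
  obtain ⟨e, he, hv⟩ := exists_orthonormal_polarVec_angle hu hv (sin_pos_of_pos_of_lt_pi h0 hπ)
  conv_lhs => rw [← hv]
  exact measure_separatingNormals_polarVec hinv hnull he h0.le hπ.le

theorem measure_separatingNormals {u v : E} (hu : u ≠ 0) (hv : v ≠ 0) :
    (μ (separatingNormals u v)).toReal = angle u v / π := by
  have hu' : 0 < ‖u‖⁻¹ := inv_pos.2 (norm_pos_iff.2 hu)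
  have hv' : 0 < ‖v‖⁻¹ := inv_pos.2 (norm_pos_iff.2 hv)
  rw [← separatingNormals_smul hu' hv', ← angle_smul_left_of_pos u v hu',
    ← angle_smul_right_of_pos _ v hv']
  exact measure_separatingNormals_of_norm_eq_one hinv hnull (norm_smul_inv_norm hu)
    (norm_smul_inv_norm hv)

end Angle

end RandomHyperplane

open RandomHyperplane

/-- The uniform distribution of `r` is modelled as a probability measure carried by the unit
sphere and invariant under all linear isometries. -/
theorem random_hyperplane_collision {d : ℕ}
    (μ : Measure (EuclideanSpace ℝ (Fin d))) [IsProbabilityMeasure μ]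
    (hsphere : μ (Metric.sphere (0 : EuclideanSpace ℝ (Fin d)) 1) = 1)
    (hinv : ∀ T : EuclideanSpace ℝ (Fin d) ≃ₗᵢ[ℝ] EuclideanSpace ℝ (Fin d),
      μ.map T = μ)
    (f g : EuclideanSpace ℝ (Fin d)) (hf : f ≠ 0) (hg : g ≠ 0) :
    (μ {r | Real.sign ⟪r, f⟫ = Real.sign ⟪r, g⟫}).toReal
      = 1 - (1 / Real.pi) * Real.arccos (⟪f, g⟫ / (‖f‖ * ‖g‖)) := by
  have h0 : μ {0} = 0 :=
    measure_mono_null (by simp)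
      ((prob_compl_eq_zero_iff Metric.isClosed_sphere.measurableSet).2 hsphere)
  have hset : {r | Real.sign ⟪r, f⟫ = Real.sign ⟪r, g⟫} = (separatingNormals f g)ᶜ := by
    ext r
    simp [separatingNormals]
  rw [hset, prob_compl_eq_one_sub (measurableSet_separatingNormals f g),
    ENNReal.toReal_sub_of_le prob_le_one ENNReal.one_ne_top, ENNReal.toReal_one,
    measure_separatingNormals hinv (fun u hu => measure_inner_eq_zero hinv h0 hu) hf hg,
    InnerProductGeometry.angle]
  ring
end

section
/- 1 − J is a metric on nonnegative vectors: for nonnegative vectors u, v, w on a finite index set (pairwise not simultaneously zero), 1 − J(u,w) ≤ (1 − J(u,v)) + (1 − J(v,w)), where J is the weighted Jaccard similarity. -/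
lemma wj_aux_max (n : ℕ) (x y : Fin n → ℝ) :
    2 * (∑ i, max (x i) (y i)) = (∑ i, x i) + (∑ i, y i) + ∑ i, |x i - y i| := by
  rw [Finset.mul_sum, ← Finset.sum_add_distrib, ← Finset.sum_add_distrib]
  refine Finset.sum_congr rfl fun i _ => ?_
  rcases le_total (x i) (y i) with h | h
  · rw [max_eq_right h, abs_of_nonpos (by linarith)]; ring
  · rw [max_eq_left h, abs_of_nonneg (by linarith)]; ring

lemma wj_aux_min (n : ℕ) (x y : Fin n → ℝ) :
    2 * (∑ i, min (x i) (y i)) = (∑ i, x i) + (∑ i, y i) - ∑ i, |x i - y i| := by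
  rw [Finset.mul_sum, ← Finset.sum_add_distrib, ← Finset.sum_sub_distrib]
  refine Finset.sum_congr rfl fun i _ => ?_
  rcases le_total (x i) (y i) with h | h
  · rw [min_eq_left h, abs_of_nonpos (by linarith)]; ring
  · rw [min_eq_right h, abs_of_nonneg (by linarith)]; ring

lemma wj_form (n : ℕ) (x y : Fin n → ℝ) (h : 0 < ∑ i, max (x i) (y i)) :
    1 - (∑ i, min (x i) (y i)) / (∑ i, max (x i) (y i)) =
      (2 * ∑ i, |x i - y i|) / ((∑ i, x i) + (∑ i, y i) + ∑ i, |x i - y i|) := by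
  have hmax := wj_aux_max n x y
  have hmin := wj_aux_min n x y
  have h1 : (2:ℝ) * ∑ i, |x i - y i| =
      2 * (∑ i, max (x i) (y i)) - 2 * (∑ i, min (x i) (y i)) := by linarith
  rw [← hmax, h1, sub_div, div_self (ne_of_gt (by linarith)),
    mul_div_mul_left _ _ two_ne_zero]

/-- Triangle inequality for the weighted Jaccard distance `1 − J`:
for nonnegative vectors `u, v, w` on `Fin n`, pairwise not simultaneously zero,
`1 − J(u,w) ≤ (1 − J(u,v)) + (1 − J(v,w))` where
`J(x,y) = (∑ i, min (x i) (y i)) / (∑ i, max (x i) (y i))`. -/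
theorem weighted_jaccard_distance_triangle {n : ℕ} (u v w : Fin n → ℝ)
    (hu : ∀ i, 0 ≤ u i) (hv : ∀ i, 0 ≤ v i) (hw : ∀ i, 0 ≤ w i)
    (huv : 0 < ∑ i, max (u i) (v i)) (hvw : 0 < ∑ i, max (v i) (w i))
    (huw : 0 < ∑ i, max (u i) (w i)) :
    1 - (∑ i, min (u i) (w i)) / (∑ i, max (u i) (w i)) ≤
      (1 - (∑ i, min (u i) (v i)) / (∑ i, max (u i) (v i))) +
      (1 - (∑ i, min (v i) (w i)) / (∑ i, max (v i) (w i))) := by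
  rw [wj_form n u w huw, wj_form n u v huv, wj_form n v w hvw]
  set A := ∑ i, u i with hA
  set B := ∑ i, v i with hB
  set C := ∑ i, w i with hC
  set p := ∑ i, |u i - v i| with hp
  set q := ∑ i, |v i - w i| with hq
  set r := ∑ i, |u i - w i| with hr
  have hp0 : 0 ≤ p := Finset.sum_nonneg fun i _ => abs_nonneg _
  have hq0 : 0 ≤ q := Finset.sum_nonneg fun i _ => abs_nonneg _
  have hr0 : 0 ≤ r := Finset.sum_nonneg fun i _ => abs_nonneg _
  have hA0 : 0 ≤ A := Finset.sum_nonneg fun i _ => hu i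
  have hC0 : 0 ≤ C := Finset.sum_nonneg fun i _ => hw i
  have htri : r ≤ p + q := by
    calc r ≤ ∑ i, (|u i - v i| + |v i - w i|) :=
          Finset.sum_le_sum fun i _ => abs_sub_le _ _ _
      _ = p + q := Finset.sum_add_distrib
  have hBA : B ≤ A + p := by
    rw [hB, hA, hp, ← Finset.sum_add_distrib]
    refine Finset.sum_le_sum fun i _ => ?_
    have h1 := le_abs_self (v i - u i)
    rw [abs_sub_comm] at h1
    linarith
  have hBC : B ≤ C + q := by
    rw [hB, hC, hq, ← Finset.sum_add_distrib]
    refine Finset.sum_le_sum fun i _ => ?_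
    have h1 := le_abs_self (v i - w i)
    linarith
  have d1 : 0 < A + C + r := by
    have := wj_aux_max n u w; nlinarith
  have d2 : 0 < A + B + p := by
    have := wj_aux_max n u v; nlinarith
  have d3 : 0 < B + C + q := by
    have := wj_aux_max n v w; nlinarith
  have d4 : 0 < A + C + (p + q) := by linarith
  calc 2 * r / (A + C + r) ≤ 2 * (p + q) / (A + C + (p + q)) := by
        rw [div_le_div_iff₀ d1 d4]; nlinarith
    _ = 2 * p / (A + C + (p + q)) + 2 * q / (A + C + (p + q)) := by ring
    _ ≤ 2 * p / (A + B + p) + 2 * q / (B + C + q) := by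
        gcongr 2 * p / ?_ + 2 * q / ?_ <;> linarith
end
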